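/- arXiv:2605.20031 — 7 statements merged into one kernel-verified Lean document; each statement's English description precedes it below -/
import Mathlib

section
/- Let g : ℝ³ × ℝ³ → ℝ be convex, nondecreasing in each of its six scalar arguments, and invariant under permutations of its first three arguments and, separately, under permutations of its last three arguments. Then the function G : ℝ^{3×3} × ℝ^{3×3} → ℝ defined by G(F, A) = g(σ₁(F), σ₂(F), σ₃(F), σ₁(A), σ₂(A), σ₃(A)) is convex, i.e., for all real 3×3 matrices F₁, F₂, A₁, A₂ and all t ∈ [0,1], G(tF₁ + (1−t)F₂, tA₁ + (1−t)A₂) ≤ t·G(F₁, A₁) + (1−t)·G(F₂, A₂). -/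
section Helpers
open Matrix Polynomial

variable {n : ℕ}

lemma sorted_tuple_eq_of_perm {f g : Fin n → ℝ} (h : (List.ofFn f).Perm (List.ofFn g)) :
    f ∘ Tuple.sort f = g ∘ Tuple.sort g :=
  List.ofFn_injective <|
    List.Perm.eq_of_sortedLE
      (List.sortedLE_ofFn_iff.2 (Tuple.monotone_sort f))
      (List.sortedLE_ofFn_iff.2 (Tuple.monotone_sort g))
      ((((Tuple.sort f).ofFn_comp_perm f).trans h).trans
        ((Tuple.sort g).ofFn_comp_perm g).symm)

lemma charpoly_conj (V A : Matrix (Fin n) (Fin n) ℝ) (hV : V * Vᵀ = 1) :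
    (V * A * Vᵀ).charpoly = A.charpoly := by
  let Cm : ℝ →+* ℝ[X] := Polynomial.C
  have hmul : ∀ B B' : Matrix (Fin n) (Fin n) ℝ, (B * B').map Cm = B.map Cm * B'.map Cm :=
    fun B B' => Matrix.map_mul
  have hone : (1 : Matrix (Fin n) (Fin n) ℝ).map Cm = 1 :=
    Matrix.map_one Cm (map_zero Cm) (map_one Cm)
  have key : charmatrix (V * A * Vᵀ) = V.map Cm * charmatrix A * Vᵀ.map Cm := by
    have hc : V.map Cm * (scalar (Fin n)) X = (scalar (Fin n)) X * V.map Cm :=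
      ((scalar_commute (n := Fin n) X (fun r => Commute.all X r) (V.map Cm))).symm
    rw [charmatrix, charmatrix, Matrix.mul_sub, Matrix.sub_mul]
    congr 1
    · rw [hc, Matrix.mul_assoc, ← hmul, hV, hone, Matrix.mul_one]
    · simp only [RingHom.mapMatrix_apply]
      rw [hmul, hmul]
  rw [Matrix.charpoly, Matrix.charpoly, key, Matrix.det_mul, Matrix.det_mul]
  have hdet : det (V.map Cm) * det (Vᵀ.map Cm) = 1 := by
    rw [← Matrix.det_mul, ← hmul, hV, hone, Matrix.det_one]
  calc det (V.map Cm) * (charmatrix A).det * det (Vᵀ.map Cm)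
      = det (V.map Cm) * det (Vᵀ.map Cm) * (charmatrix A).det := by ring
    _ = (charmatrix A).det := by rw [hdet, one_mul]


lemma charpoly_hermitian (S : Matrix (Fin n) (Fin n) ℝ) (hS : S.IsHermitian) :
    S.charpoly = ∏ i, (X - Polynomial.C (hS.eigenvalues i)) := by
  set U : Matrix (Fin n) (Fin n) ℝ := (Matrix.IsHermitian.eigenvectorUnitary hS : Matrix (Fin n) (Fin n) ℝ) with hUdef
  have hU : U * Uᵀ = 1 := by
    have := (Matrix.mem_unitaryGroup_iff).mp (Matrix.IsHermitian.eigenvectorUnitary hS).2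
    rwa [Matrix.star_eq_conjTranspose, Matrix.conjTranspose_eq_transpose_of_trivial] at this
  have hst := hS.spectral_theorem
  rw [Unitary.conjStarAlgAut_apply, Matrix.star_eq_conjTranspose, Matrix.conjTranspose_eq_transpose_of_trivial] at hst
  have hdiag : (Matrix.diagonal (RCLike.ofReal ∘ hS.eigenvalues) : Matrix (Fin n) (Fin n) ℝ)
      = Matrix.diagonal hS.eigenvalues := by
    congr 1
  have hS' : S = U * Matrix.diagonal hS.eigenvalues * Uᵀ := by
    rw [← hdiag]; exact hst
  rw [show S.charpoly = (U * Matrix.diagonal hS.eigenvalues * Uᵀ).charpoly from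
      congrArg Matrix.charpoly hS',
    charpoly_conj U _ hU,
    Matrix.charpoly_of_upperTriangular _ (Matrix.blockTriangular_diagonal _)]
  simp

lemma eig_sorted_eq_of_conj (S : Matrix (Fin n) (Fin n) ℝ) (hS : S.IsHermitian)
    (d : Fin n → ℝ) (V : Matrix (Fin n) (Fin n) ℝ) (hV : V * Vᵀ = 1)
    (hSVD : S = V * Matrix.diagonal d * Vᵀ) :
    hS.eigenvalues ∘ Tuple.sort hS.eigenvalues = d ∘ Tuple.sort d := by
  apply sorted_tuple_eq_of_perm
  have h1 : ∏ i, (X - Polynomial.C (hS.eigenvalues i)) = ∏ i, (X - Polynomial.C (d i)) := by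
    rw [← charpoly_hermitian S hS,
      show S.charpoly = (V * Matrix.diagonal d * Vᵀ).charpoly from congrArg Matrix.charpoly hSVD,
      charpoly_conj _ _ hV,
      Matrix.charpoly_of_upperTriangular _ (Matrix.blockTriangular_diagonal _)]
    simp
  have conv : ∀ f : Fin n → ℝ, (∏ i, (X - Polynomial.C (f i)))
      = (((List.ofFn f : Multiset ℝ)).map fun a => X - Polynomial.C a).prod := by
    intro f
    rw [Finset.prod_eq_multiset_prod, ← Fin.univ_val_map, Multiset.map_map]
    rfl
  have h2 : (List.ofFn hS.eigenvalues : Multiset ℝ) = (List.ofFn d : Multiset ℝ) := by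
    have := congrArg Polynomial.roots h1
    rwa [conv, conv, Polynomial.roots_multiset_prod_X_sub_C,
      Polynomial.roots_multiset_prod_X_sub_C] at this
  exact Multiset.coe_eq_coe.mp h2

end Helpers


/-- The decreasingly ordered singular values of a real 3×3 matrix:
`singularValues F 0 ≥ singularValues F 1 ≥ singularValues F 2` are the square roots of the
eigenvalues of the symmetric positive semidefinite matrix `Fᵀ F`. -/
noncomputable def singularValues (F : Matrix (Fin 3) (Fin 3) ℝ) : Fin 3 → ℝ := fun k =>
  Real.sqrt
    (((show (Matrix.transpose F * F).IsHermitian by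
      simpa using Matrix.isHermitian_conjTranspose_mul_self F).eigenvalues ∘
      Tuple.sort (show (Matrix.transpose F * F).IsHermitian by
      simpa using Matrix.isHermitian_conjTranspose_mul_self F).eigenvalues) k.rev)

lemma isHermitian_transpose_mul_self' (F : Matrix (Fin 3) (Fin 3) ℝ) :
    (Matrix.transpose F * F).IsHermitian := by
  simpa using Matrix.isHermitian_conjTranspose_mul_self F


section SV
open Matrix Polynomial

lemma singularValues_unique (M U V : Matrix (Fin 3) (Fin 3) ℝ) (d : Fin 3 → ℝ)
    (hU : Uᵀ * U = 1) (hV : Vᵀ * V = 1) (hd : Antitone d) (hd0 : ∀ i, 0 ≤ d i)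
    (hM : M = U * Matrix.diagonal d * Vᵀ) : singularValues M = d := by
  have hS : Mᵀ * M = V * Matrix.diagonal (fun i => d i ^ 2) * Vᵀ := by
    rw [hM]
    have : (U * Matrix.diagonal d * Vᵀ)ᵀ = V * Matrix.diagonal d * Uᵀ := by
      simp [Matrix.transpose_mul, Matrix.diagonal_transpose, Matrix.mul_assoc]
    rw [this]
    have : V * Matrix.diagonal d * Uᵀ * (U * Matrix.diagonal d * Vᵀ)
        = V * (Matrix.diagonal d * (Uᵀ * U) * Matrix.diagonal d) * Vᵀ := by
      simp only [Matrix.mul_assoc]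
    rw [this, hU, Matrix.mul_one, Matrix.diagonal_mul_diagonal]
    congr 2
    funext i
    ring
  have hV' : V * Vᵀ = 1 := mul_eq_one_comm.mp hV
  have hsorted := eig_sorted_eq_of_conj (Mᵀ * M) (isHermitian_transpose_mul_self' M)
    (fun i => d i ^ 2) V hV' hS
  have hrev : (fun i => d i ^ 2) ∘ Tuple.sort (fun i => d i ^ 2)
      = (fun i => d i ^ 2) ∘ (Fin.revPerm : Equiv.Perm (Fin 3)) := by
    apply Tuple.unique_monotone (f := fun i => d i ^ 2)
    · exact Tuple.monotone_sort _
    · intro k l hkl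
      simp only [Function.comp_apply, Fin.revPerm_apply]
      have h1 : l.rev ≤ k.rev := Fin.rev_le_rev.mpr hkl
      exact pow_le_pow_left₀ (hd0 _) (hd h1) 2
  funext k
  have : singularValues M k = Real.sqrt ((((isHermitian_transpose_mul_self' M).eigenvalues ∘
      Tuple.sort (isHermitian_transpose_mul_self' M).eigenvalues)) k.rev) := rfl
  rw [this, hsorted, hrev]
  simp only [Function.comp_apply, Fin.revPerm_apply, Fin.rev_rev]
  exact Real.sqrt_sq (hd0 k)

lemma singularValues_nonneg (M : Matrix (Fin 3) (Fin 3) ℝ) (i : Fin 3) :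
    0 ≤ singularValues M i := Real.sqrt_nonneg _

lemma singularValues_antitone (M : Matrix (Fin 3) (Fin 3) ℝ) : Antitone (singularValues M) := by
  intro k l hkl
  apply Real.sqrt_le_sqrt
  exact Tuple.monotone_sort _ (Fin.rev_le_rev.mpr hkl)

lemma exists_svd (M : Matrix (Fin 3) (Fin 3) ℝ) :
    ∃ U V : Matrix (Fin 3) (Fin 3) ℝ, Uᵀ * U = 1 ∧ Vᵀ * V = 1 ∧
      M = U * Matrix.diagonal (singularValues M) * Vᵀ := by
  have hS := isHermitian_transpose_mul_self' M
  set μ : Fin 3 → ℝ := hS.eigenvalues with hμdef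
  set π : Equiv.Perm (Fin 3) := Tuple.sort μ with hπdef
  set s : Fin 3 → ℝ := singularValues M with hsdef
  have hps : (Mᵀ * M).PosSemidef := by
    rw [← Matrix.conjTranspose_eq_transpose_of_trivial]
    exact Matrix.posSemidef_conjTranspose_mul_self M
  have hμ0 : ∀ i, 0 ≤ μ i := fun i => hps.eigenvalues_nonneg i
  have hsq : ∀ k, s k ^ 2 = μ (π k.rev) := by
    intro k
    exact Real.sq_sqrt (hμ0 _)
  have hs0 : ∀ k, 0 ≤ s k := fun k => Real.sqrt_nonneg _
  set w : Fin 3 → EuclideanSpace ℝ (Fin 3) := fun j => hS.eigenvectorBasis (π j.rev) with hwdef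
  have heig : ∀ j, (Mᵀ * M) *ᵥ (w j : Fin 3 → ℝ) = μ (π j.rev) • (w j : Fin 3 → ℝ) :=
    fun j => hS.mulVec_eigenvectorBasis (π j.rev)
  have hwinner : ∀ i j, (w i : Fin 3 → ℝ) ⬝ᵥ (w j : Fin 3 → ℝ) = if i = j then 1 else 0 := by
    intro i j
    have horth := hS.eigenvectorBasis.orthonormal
    have h1 : inner ℝ (w i) (w j) = if π i.rev = π j.rev then (1:ℝ) else 0 :=
      orthonormal_iff_ite.mp horth _ _
    have h2 : ((π i.rev = π j.rev) ↔ (i = j)) := by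
      constructor
      · intro h
        have := π.injective h
        exact Fin.rev_injective this
      · rintro rfl; rfl
    have h3 : inner ℝ (w i) (w j) = (w i : Fin 3 → ℝ) ⬝ᵥ (w j : Fin 3 → ℝ) := by
      simp [PiLp.inner_apply, RCLike.inner_apply, dotProduct, mul_comm]
    rw [← h3, h1]
    simp only [h2]
  set V : Matrix (Fin 3) (Fin 3) ℝ := Matrix.of (fun r j => (w j : Fin 3 → ℝ) r) with hVdef
  have hV : Vᵀ * V = 1 := by
    ext i j
    simp only [Matrix.mul_apply, Matrix.transpose_apply, hVdef, Matrix.of_apply]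
    have := hwinner i j
    simp only [dotProduct] at this
    rw [this]
    by_cases h : i = j <;> simp [h, Matrix.one_apply]
  set u : Fin 3 → (Fin 3 → ℝ) := fun j => M *ᵥ (w j : Fin 3 → ℝ) with hudef
  have hu : ∀ i j, u i ⬝ᵥ u j = if i = j then s i ^ 2 else 0 := by
    intro i j
    rw [hudef]
    simp only
    rw [Matrix.dotProduct_mulVec, ← Matrix.mulVec_transpose, Matrix.mulVec_mulVec, heig,
      smul_dotProduct, hwinner]
    by_cases h : i = j
    · subst h; simp [hsq i]
    · simp [h]
  have hu0 : ∀ j, s j = 0 → u j = 0 := by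
    intro j hj
    have h0 : u j ⬝ᵥ u j = 0 := by rw [hu j j]; simp [hj]
    exact dotProduct_self_eq_zero.mp h0
  set vE : Fin 3 → EuclideanSpace ℝ (Fin 3) :=
    fun j => (s j)⁻¹ • ((WithLp.equiv 2 (Fin 3 → ℝ)).symm (u j)) with hvEdef
  have hinner_u : ∀ i j, (inner ℝ (vE i) (vE j) : ℝ) = (s i)⁻¹ * (s j)⁻¹ * (u i ⬝ᵥ u j) := by
    intro i j
    rw [hvEdef]
    simp only [real_inner_smul_left, real_inner_smul_right]
    have : (inner ℝ ((WithLp.equiv 2 (Fin 3 → ℝ)).symm (u i))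
        ((WithLp.equiv 2 (Fin 3 → ℝ)).symm (u j)) : ℝ) = u i ⬝ᵥ u j := by
      simp [PiLp.inner_apply, RCLike.inner_apply, dotProduct, mul_comm]
    rw [this]
    ring
  have horthres : Orthonormal ℝ (Set.restrict {j | s j ≠ 0} vE) := by
    rw [orthonormal_iff_ite]
    rintro ⟨i, hi⟩ ⟨j, hj⟩
    show inner ℝ (vE i) (vE j) = if (⟨i, hi⟩ : {j | s j ≠ 0}) = ⟨j, hj⟩ then (1:ℝ) else 0
    rw [hinner_u, hu]
    by_cases h : i = j
    · subst h
      have hne : s i ≠ 0 := hi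
      rw [if_pos rfl, if_pos rfl]
      field_simp
    · have : (⟨i, hi⟩ : {j | s j ≠ 0}) ≠ ⟨j, hj⟩ := fun hc => h (congrArg Subtype.val hc)
      rw [if_neg h, if_neg this]
      ring
  obtain ⟨b, hb⟩ := horthres.exists_orthonormalBasis_extension_of_card_eq
    (by simp [finrank_euclideanSpace])
  set U : Matrix (Fin 3) (Fin 3) ℝ := Matrix.of (fun r j => (b j : Fin 3 → ℝ) r) with hUdef
  have hU : Uᵀ * U = 1 := by
    ext i j
    simp only [Matrix.mul_apply, Matrix.transpose_apply, hUdef, Matrix.of_apply]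
    have h1 : (inner ℝ (b i) (b j) : ℝ) = if i = j then 1 else 0 :=
      orthonormal_iff_ite.mp b.orthonormal _ _
    have h3 : (inner ℝ (b i) (b j) : ℝ) = ∑ r, (b i : Fin 3 → ℝ) r * (b j : Fin 3 → ℝ) r := by
      simp [PiLp.inner_apply, RCLike.inner_apply, mul_comm]
    rw [← h3, h1]
    by_cases h : i = j <;> simp [h, Matrix.one_apply]
  have hkey : ∀ j, u j = fun r => s j * (b j : Fin 3 → ℝ) r := by
    intro j
    by_cases hj : s j = 0
    · rw [hu0 j hj]
      funext r
      simp [hj]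
    · have hbj : b j = vE j := hb j hj
      funext r
      rw [hbj, hvEdef]
      simp only [PiLp.smul_apply, smul_eq_mul]
      have : ((WithLp.equiv 2 (Fin 3 → ℝ)).symm (u j) : Fin 3 → ℝ) r = u j r := rfl
      rw [this]
      field_simp
  have hV' : V * Vᵀ = 1 := mul_eq_one_comm.mp hV
  refine ⟨U, V, hU, hV, ?_⟩
  have hMV : M * V = U * Matrix.diagonal s := by
    ext r j
    rw [Matrix.mul_diagonal]
    simp only [Matrix.mul_apply, hVdef, hUdef, Matrix.of_apply]
    have h1 : ∑ k, M r k * (w j : Fin 3 → ℝ) k = u j r := rfl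
    rw [h1, hkey j]
    ring
  calc M = M * (V * Vᵀ) := by rw [hV', Matrix.mul_one]
    _ = (M * V) * Vᵀ := by rw [Matrix.mul_assoc]
    _ = U * Matrix.diagonal s * Vᵀ := by rw [hMV]

lemma key_combinatorial (a e : Fin 3 → ℝ) (ha01 : a 1 ≤ a 0) (ha12 : a 2 ≤ a 1) (ha0 : 0 ≤ a 2)
    (he01 : e 1 ≤ e 0) (he12 : e 2 ≤ e 1) (he0 : 0 ≤ e 2)
    (c : Fin 3 → Fin 3 → ℝ) (hc : ∀ i j, 0 ≤ c i j)
    (hrow : ∀ i : Fin 3, c i 0 + c i 1 + c i 2 ≤ 1)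
    (hcol : ∀ j : Fin 3, c 0 j + c 1 j + c 2 j ≤ 1) :
    ∑ i, ∑ j, a i * e j * c i j ≤ ∑ i, a i * e i := by
  have h00 : 0 ≤ (a 0 - a 1) * (e 0 - e 1) * (1 - (c 0 0)) := by
    apply mul_nonneg (mul_nonneg (by linarith [ha01, ha12]) (by linarith [he01, he12]))
    have := hc 0 0; have := hc 0 1; have := hc 0 2; have := hc 1 0; have := hc 1 1
    have := hc 1 2; have := hc 2 0; have := hc 2 1; have := hc 2 2
    have := hrow 0; have := hrow 1; have := hrow 2
    have := hcol 0; have := hcol 1; have := hcol 2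
    linarith
  have h01 : 0 ≤ (a 0 - a 1) * (e 1 - e 2) * (1 - (c 0 0 + c 0 1)) := by
    apply mul_nonneg (mul_nonneg (by linarith [ha01, ha12]) (by linarith [he01, he12]))
    have := hc 0 0; have := hc 0 1; have := hc 0 2; have := hc 1 0; have := hc 1 1
    have := hc 1 2; have := hc 2 0; have := hc 2 1; have := hc 2 2
    have := hrow 0; have := hrow 1; have := hrow 2
    have := hcol 0; have := hcol 1; have := hcol 2
    linarith
  have h02 : 0 ≤ (a 0 - a 1) * (e 2) * (1 - (c 0 0 + c 0 1 + c 0 2)) := by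
    apply mul_nonneg (mul_nonneg (by linarith [ha01, ha12]) (by linarith [he01, he12]))
    have := hc 0 0; have := hc 0 1; have := hc 0 2; have := hc 1 0; have := hc 1 1
    have := hc 1 2; have := hc 2 0; have := hc 2 1; have := hc 2 2
    have := hrow 0; have := hrow 1; have := hrow 2
    have := hcol 0; have := hcol 1; have := hcol 2
    linarith
  have h10 : 0 ≤ (a 1 - a 2) * (e 0 - e 1) * (1 - (c 0 0 + c 1 0)) := by
    apply mul_nonneg (mul_nonneg (by linarith [ha01, ha12]) (by linarith [he01, he12]))
    have := hc 0 0; have := hc 0 1; have := hc 0 2; have := hc 1 0; have := hc 1 1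
    have := hc 1 2; have := hc 2 0; have := hc 2 1; have := hc 2 2
    have := hrow 0; have := hrow 1; have := hrow 2
    have := hcol 0; have := hcol 1; have := hcol 2
    linarith
  have h11 : 0 ≤ (a 1 - a 2) * (e 1 - e 2) * (2 - (c 0 0 + c 0 1 + c 1 0 + c 1 1)) := by
    apply mul_nonneg (mul_nonneg (by linarith [ha01, ha12]) (by linarith [he01, he12]))
    have := hc 0 0; have := hc 0 1; have := hc 0 2; have := hc 1 0; have := hc 1 1
    have := hc 1 2; have := hc 2 0; have := hc 2 1; have := hc 2 2
    have := hrow 0; have := hrow 1; have := hrow 2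
    have := hcol 0; have := hcol 1; have := hcol 2
    linarith
  have h12 : 0 ≤ (a 1 - a 2) * (e 2) * (2 - (c 0 0 + c 0 1 + c 0 2 + c 1 0 + c 1 1 + c 1 2)) := by
    apply mul_nonneg (mul_nonneg (by linarith [ha01, ha12]) (by linarith [he01, he12]))
    have := hc 0 0; have := hc 0 1; have := hc 0 2; have := hc 1 0; have := hc 1 1
    have := hc 1 2; have := hc 2 0; have := hc 2 1; have := hc 2 2
    have := hrow 0; have := hrow 1; have := hrow 2
    have := hcol 0; have := hcol 1; have := hcol 2
    linarith
  have h20 : 0 ≤ (a 2) * (e 0 - e 1) * (1 - (c 0 0 + c 1 0 + c 2 0)) := by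
    apply mul_nonneg (mul_nonneg (by linarith [ha01, ha12]) (by linarith [he01, he12]))
    have := hc 0 0; have := hc 0 1; have := hc 0 2; have := hc 1 0; have := hc 1 1
    have := hc 1 2; have := hc 2 0; have := hc 2 1; have := hc 2 2
    have := hrow 0; have := hrow 1; have := hrow 2
    have := hcol 0; have := hcol 1; have := hcol 2
    linarith
  have h21 : 0 ≤ (a 2) * (e 1 - e 2) * (2 - (c 0 0 + c 0 1 + c 1 0 + c 1 1 + c 2 0 + c 2 1)) := by
    apply mul_nonneg (mul_nonneg (by linarith [ha01, ha12]) (by linarith [he01, he12]))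
    have := hc 0 0; have := hc 0 1; have := hc 0 2; have := hc 1 0; have := hc 1 1
    have := hc 1 2; have := hc 2 0; have := hc 2 1; have := hc 2 2
    have := hrow 0; have := hrow 1; have := hrow 2
    have := hcol 0; have := hcol 1; have := hcol 2
    linarith
  have h22 : 0 ≤ (a 2) * (e 2) * (3 - (c 0 0 + c 0 1 + c 0 2 + c 1 0 + c 1 1 + c 1 2 + c 2 0 + c 2 1 + c 2 2)) := by
    apply mul_nonneg (mul_nonneg (by linarith [ha01, ha12]) (by linarith [he01, he12]))
    have := hc 0 0; have := hc 0 1; have := hc 0 2; have := hc 1 0; have := hc 1 1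
    have := hc 1 2; have := hc 2 0; have := hc 2 1; have := hc 2 2
    have := hrow 0; have := hrow 1; have := hrow 2
    have := hcol 0; have := hcol 1; have := hcol 2
    linarith
  have key : (∑ i, a i * e i) - (∑ i, ∑ j, a i * e j * c i j)
      = (a 0 - a 1) * (e 0 - e 1) * (1 - (c 0 0)) + (a 0 - a 1) * (e 1 - e 2) * (1 - (c 0 0 + c 0 1)) + (a 0 - a 1) * (e 2) * (1 - (c 0 0 + c 0 1 + c 0 2)) + (a 1 - a 2) * (e 0 - e 1) * (1 - (c 0 0 + c 1 0)) + (a 1 - a 2) * (e 1 - e 2) * (2 - (c 0 0 + c 0 1 + c 1 0 + c 1 1)) + (a 1 - a 2) * (e 2) * (2 - (c 0 0 + c 0 1 + c 0 2 + c 1 0 + c 1 1 + c 1 2)) + (a 2) * (e 0 - e 1) * (1 - (c 0 0 + c 1 0 + c 2 0)) + (a 2) * (e 1 - e 2) * (2 - (c 0 0 + c 0 1 + c 1 0 + c 1 1 + c 2 0 + c 2 1)) + (a 2) * (e 2) * (3 - (c 0 0 + c 0 1 + c 0 2 + c 1 0 + c 1 1 + c 1 2 + c 2 0 + c 2 1 +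 c 2 2)) := by
    simp only [Fin.sum_univ_three]
    ring
  linarith

lemma trace_le_sum_sv (a : Fin 3 → ℝ) (ha : Antitone a) (ha0 : 0 ≤ a 2)
    (N U V : Matrix (Fin 3) (Fin 3) ℝ) (hU : Uᵀ * U = 1) (hV : Vᵀ * V = 1) :
    Matrix.trace (Matrix.diagonal a * Uᵀ * N * V) ≤ ∑ i, a i * singularValues N i := by
  obtain ⟨P, Q, hP, hQ, hN⟩ := exists_svd N
  set e : Fin 3 → ℝ := singularValues N with hedef
  set R : Matrix (Fin 3) (Fin 3) ℝ := Uᵀ * P with hRdef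
  set S : Matrix (Fin 3) (Fin 3) ℝ := Vᵀ * Q with hSdef
  have hU' : U * Uᵀ = 1 := mul_eq_one_comm.mp hU
  have hV' : V * Vᵀ = 1 := mul_eq_one_comm.mp hV
  have hRo : Rᵀ * R = 1 := by
    rw [hRdef, Matrix.transpose_mul, Matrix.transpose_transpose]
    calc Pᵀ * U * (Uᵀ * P) = Pᵀ * (U * Uᵀ) * P := by simp only [Matrix.mul_assoc]
      _ = 1 := by rw [hU', Matrix.mul_one, hP]
  have hSo : Sᵀ * S = 1 := by
    rw [hSdef, Matrix.transpose_mul, Matrix.transpose_transpose]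
    calc Qᵀ * V * (Vᵀ * Q) = Qᵀ * (V * Vᵀ) * Q := by simp only [Matrix.mul_assoc]
      _ = 1 := by rw [hV', Matrix.mul_one, hQ]
  have hRo' : R * Rᵀ = 1 := mul_eq_one_comm.mp hRo
  have hSo' : S * Sᵀ = 1 := mul_eq_one_comm.mp hSo
  have hrewrite : Matrix.diagonal a * Uᵀ * N * V = Matrix.diagonal a * (R * Matrix.diagonal e * Sᵀ) := by
    rw [hN, hRdef, hSdef, Matrix.transpose_mul, Matrix.transpose_transpose]
    simp only [Matrix.mul_assoc]
  have htrace : Matrix.trace (Matrix.diagonal a * Uᵀ * N * V)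
      = ∑ i, ∑ j, a i * (R i j * e j * S i j) := by
    rw [hrewrite, Matrix.trace]
    congr 1
    funext i
    rw [Matrix.diag_apply, Matrix.diagonal_mul, Matrix.mul_apply]
    rw [Finset.mul_sum]
    congr 1
    funext j
    rw [Matrix.mul_diagonal, Matrix.transpose_apply]
  have hrowsum : ∀ i : Fin 3, R i 0 ^ 2 + R i 1 ^ 2 + R i 2 ^ 2 = 1 := by
    intro i
    have := congrFun (congrFun hRo' i) i
    simp only [Matrix.mul_apply, Matrix.transpose_apply, Fin.sum_univ_three,
      Matrix.one_apply_eq] at this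
    nlinarith [this]
  have hcolsum : ∀ j : Fin 3, R 0 j ^ 2 + R 1 j ^ 2 + R 2 j ^ 2 = 1 := by
    intro j
    have := congrFun (congrFun hRo j) j
    simp only [Matrix.mul_apply, Matrix.transpose_apply, Fin.sum_univ_three,
      Matrix.one_apply_eq] at this
    nlinarith [this]
  have hrowsumS : ∀ i : Fin 3, S i 0 ^ 2 + S i 1 ^ 2 + S i 2 ^ 2 = 1 := by
    intro i
    have := congrFun (congrFun hSo' i) i
    simp only [Matrix.mul_apply, Matrix.transpose_apply, Fin.sum_univ_three,
      Matrix.one_apply_eq] at this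
    nlinarith [this]
  have hcolsumS : ∀ j : Fin 3, S 0 j ^ 2 + S 1 j ^ 2 + S 2 j ^ 2 = 1 := by
    intro j
    have := congrFun (congrFun hSo j) j
    simp only [Matrix.mul_apply, Matrix.transpose_apply, Fin.sum_univ_three,
      Matrix.one_apply_eq] at this
    nlinarith [this]
  set c : Fin 3 → Fin 3 → ℝ := fun i j => (R i j ^ 2 + S i j ^ 2) / 2 with hcdef
  have he0 : ∀ i, 0 ≤ e i := fun i => singularValues_nonneg N i
  have heanti := singularValues_antitone N
  have step1 : ∑ i, ∑ j, a i * (R i j * e j * S i j) ≤ ∑ i, ∑ j, a i * e j * c i j := by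
    apply Finset.sum_le_sum
    intro i _
    apply Finset.sum_le_sum
    intro j _
    have h1 : R i j * S i j ≤ c i j := by
      rw [hcdef]
      nlinarith [sq_nonneg (R i j - S i j)]
    have h2 : 0 ≤ a i := le_trans ha0 (ha (by omega : i ≤ 2))
    have h3 : 0 ≤ e j := he0 j
    calc a i * (R i j * e j * S i j) = (a i * e j) * (R i j * S i j) := by ring
      _ ≤ (a i * e j) * c i j := by
          apply mul_le_mul_of_nonneg_left h1 (mul_nonneg h2 h3)
      _ = a i * e j * c i j := by ring
  have step2 : ∑ i, ∑ j, a i * e j * c i j ≤ ∑ i, a i * e i := by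
    apply key_combinatorial a e (ha (by omega : (0:Fin 3) ≤ 1)) (ha (by omega : (1:Fin 3) ≤ 2)) ha0
      (heanti (by omega : (0:Fin 3) ≤ 1)) (heanti (by omega : (1:Fin 3) ≤ 2)) (he0 2) c
    · intro i j
      rw [hcdef]
      positivity
    · intro i
      have := hrowsum i; have := hrowsumS i
      simp only [hcdef]
      linarith
    · intro j
      have := hcolsum j; have := hcolsumS j
      simp only [hcdef]
      linarith
  rw [htrace]
  exact le_trans step1 step2

lemma weighted_subadd (a : Fin 3 → ℝ) (ha : Antitone a) (ha0 : 0 ≤ a 2)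
    (M N : Matrix (Fin 3) (Fin 3) ℝ) :
    ∑ i, a i * singularValues (M + N) i
      ≤ ∑ i, a i * singularValues M i + ∑ i, a i * singularValues N i := by
  obtain ⟨U, V, hU, hV, hMN⟩ := exists_svd (M + N)
  set sMN : Fin 3 → ℝ := singularValues (M + N) with hsdef
  have hD : Matrix.diagonal sMN = Uᵀ * (M + N) * V := by
    rw [hMN]
    calc Matrix.diagonal sMN
        = 1 * Matrix.diagonal sMN * 1 := by
          rw [Matrix.one_mul, Matrix.mul_one]
      _ = (Uᵀ * U) * Matrix.diagonal sMN * (Vᵀ * V) := by rw [hU, hV]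
      _ = Uᵀ * (U * Matrix.diagonal sMN * Vᵀ) * V := by
          simp only [Matrix.mul_assoc]
  have htr : ∑ i, a i * sMN i
      = Matrix.trace (Matrix.diagonal a * Uᵀ * (M + N) * V) := by
    have h1 : Matrix.diagonal a * Uᵀ * (M + N) * V
        = Matrix.diagonal a * Matrix.diagonal sMN := by
      rw [hD]
      simp only [Matrix.mul_assoc]
    rw [h1, Matrix.diagonal_mul_diagonal, Matrix.trace_diagonal]
  have hsplit : Matrix.diagonal a * Uᵀ * (M + N) * V
      = Matrix.diagonal a * Uᵀ * M * V + Matrix.diagonal a * Uᵀ * N * V := by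
    rw [Matrix.mul_add, Matrix.add_mul]
  rw [htr, hsplit, Matrix.trace_add]
  exact add_le_add (trace_le_sum_sv a ha ha0 M U V hU hV)
    (trace_le_sum_sv a ha ha0 N U V hU hV)

lemma sv_smul (t : ℝ) (ht : 0 ≤ t) (M : Matrix (Fin 3) (Fin 3) ℝ) :
    singularValues (t • M) = fun i => t * singularValues M i := by
  obtain ⟨U, V, hU, hV, hM⟩ := exists_svd M
  set sM : Fin 3 → ℝ := singularValues M with hsdef
  apply singularValues_unique (t • M) U V _ hU hV
  · intro k l hkl
    exact mul_le_mul_of_nonneg_left (singularValues_antitone M hkl) ht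
  · intro i
    exact mul_nonneg ht (singularValues_nonneg M i)
  · rw [hM]
    rw [show Matrix.diagonal (fun i => t * sM i)
        = t • Matrix.diagonal sM from by
      rw [← Matrix.diagonal_smul]; rfl]
    rw [Matrix.mul_smul, Matrix.smul_mul]
end SV

section Subgradient

lemma exists_subgradient {E : Type*} [NormedAddCommGroup E] [NormedSpace ℝ E]
    [FiniteDimensional ℝ E] (g : E → ℝ) (hconv : ConvexOn ℝ Set.univ g) (p : E) :
    ∃ φ : E →ₗ[ℝ] ℝ, ∀ x, g p + (φ x - φ p) ≤ g x := by
  have cont : Continuous g := by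
    rw [← continuousOn_univ]
    exact hconv.continuousOn isOpen_univ
  set s : Set (E × ℝ) := {q : E × ℝ | g q.1 < q.2} with hsdef
  have hopen : IsOpen s := isOpen_lt (cont.comp continuous_fst) continuous_snd
  have hconvs : Convex ℝ s := by
    rintro ⟨x, r⟩ hx ⟨y, r'⟩ hy α β hα hβ hαβ
    simp only [hsdef, Set.mem_setOf_eq] at hx hy ⊢
    have hle := hconv.2 (Set.mem_univ x) (Set.mem_univ y) hα hβ hαβ
    have h1 : α * g x ≤ α * r := mul_le_mul_of_nonneg_left hx.le hα
    have h2 : β * g y ≤ β * r' := mul_le_mul_of_nonneg_left hy.le hβ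
    rcases eq_or_lt_of_le hα with hα0 | hα0
    · have hβ1 : β = 1 := by linarith
      simp only [Prod.smul_mk, Prod.mk_add_mk, smul_eq_mul]
      have : α * g x < α * r ∨ β * g y < β * r' := Or.inr (by rw [hβ1]; simpa using hy)
      calc g (α • x + β • y) ≤ α * g x + β * g y := hle
        _ < α * r + β * r' := by
          rcases this with h | h
          · linarith
          · linarith
    · simp only [Prod.smul_mk, Prod.mk_add_mk, smul_eq_mul]
      have h1' : α * g x < α * r := mul_lt_mul_of_pos_left hx hα0
      calc g (α • x + β • y) ≤ α * g x + β * g y := hle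
        _ < α * r + β * r' := by linarith
  have hp : (p, g p) ∉ s := by simp [hsdef]
  obtain ⟨f, hf⟩ := geometric_hahn_banach_open_point hconvs hopen hp
  have hlin : ∀ (x : E) (r : ℝ), f (x, r) = f (x, 0) + r * f (0, 1) := by
    intro x r
    have hdecomp : ((x, r) : E × ℝ) = (x, (0:ℝ)) + r • ((0:E), (1:ℝ)) := by
      simp [Prod.ext_iff]
    rw [hdecomp, map_add, map_smul, smul_eq_mul]
  set c : ℝ := f (0, 1) with hcdef
  have hc : c < 0 := by
    have h1 : ((p, g p + 1) : E × ℝ) ∈ s := by simp [hsdef]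
    have := hf _ h1
    rw [hlin p (g p + 1), hlin p (g p)] at this
    linarith
  have hsupport : ∀ x : E, f (x, 0) + g x * c ≤ f (p, 0) + g p * c := by
    intro x
    by_contra hcon
    push_neg at hcon
    set δ : ℝ := (f (x, 0) + g x * c - (f (p, 0) + g p * c)) / (-c) with hδdef
    have hδpos : 0 < δ := by
      apply div_pos (by linarith) (by linarith)
    have hmem : ((x, g x + δ) : E × ℝ) ∈ s := by
      simp only [hsdef, Set.mem_setOf_eq]
      linarith
    have hlt := hf _ hmem
    rw [hlin x (g x + δ), hlin p (g p)] at hlt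
    have hδc1 : δ * (-c) = f (x, 0) + g x * c - (f (p, 0) + g p * c) :=
      div_mul_cancel₀ _ (by linarith : (-c) ≠ 0)
    have hδc : δ * c = -(f (x, 0) + g x * c - (f (p, 0) + g p * c)) := by
      have h9 : δ * c = -(δ * -c) := by ring
      rw [h9, hδc1]
    linarith
  refine ⟨((-c⁻¹) • f.toLinearMap).comp (LinearMap.inl ℝ E ℝ), fun x => ?_⟩
  have h1 := hsupport x
  simp only [LinearMap.comp_apply, LinearMap.inl_apply, LinearMap.smul_apply,
    ContinuousLinearMap.coe_coe, smul_eq_mul]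
  have hcne : c ≠ 0 := ne_of_lt hc
  have h4 : c⁻¹ * ((g p - g x) * c) ≤ c⁻¹ * (f (x, 0) - f (p, 0)) :=
    mul_le_mul_of_nonpos_left (by linarith) (inv_nonpos.mpr hc.le)
  have h5 : c⁻¹ * ((g p - g x) * c) = g p - g x := by
    field_simp
  have h6 : c⁻¹ * (f (x, 0) - f (p, 0)) = c⁻¹ * f (x, 0) - c⁻¹ * f (p, 0) := by ring
  linarith

end Subgradient

/-- **Ball's sufficient condition for polyconvexity.**
If `g : ℝ³ × ℝ³ → ℝ` is convex, nondecreasing in each of its six scalar arguments, and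
invariant under permutations of its first three and, separately, its last three arguments,
then `G (F, A) = g (σ(F), σ(A))` is convex in the pair of 3×3 matrices `(F, A)`. -/
theorem ball_polyconvexity
    (g : (Fin 3 → ℝ) × (Fin 3 → ℝ) → ℝ)
    (hconv : ConvexOn ℝ Set.univ g)
    (hmono : ∀ x y : (Fin 3 → ℝ) × (Fin 3 → ℝ),
      (∀ i, x.1 i ≤ y.1 i) → (∀ i, x.2 i ≤ y.2 i) → g x ≤ g y)
    (hperm : ∀ (σ τ : Equiv.Perm (Fin 3)) (x : (Fin 3 → ℝ) × (Fin 3 → ℝ)),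
      g (x.1 ∘ σ, x.2 ∘ τ) = g x)
    (F₁ F₂ A₁ A₂ : Matrix (Fin 3) (Fin 3) ℝ) (t : ℝ) (ht0 : 0 ≤ t) (ht1 : t ≤ 1) :
    g (singularValues (t • F₁ + (1 - t) • F₂), singularValues (t • A₁ + (1 - t) • A₂)) ≤
      t * g (singularValues F₁, singularValues A₁) +
        (1 - t) * g (singularValues F₂, singularValues A₂) := by
  set p : Fin 3 → ℝ := singularValues (t • F₁ + (1 - t) • F₂) with hpdef
  set q : Fin 3 → ℝ := singularValues (t • A₁ + (1 - t) • A₂) with hqdef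
  obtain ⟨φ, hφ⟩ := exists_subgradient g hconv (p, q)
  set ψ1 : (Fin 3 → ℝ) →ₗ[ℝ] ℝ := φ.comp (LinearMap.inl ℝ _ _) with hψ1def
  set ψ2 : (Fin 3 → ℝ) →ₗ[ℝ] ℝ := φ.comp (LinearMap.inr ℝ _ _) with hψ2def
  set a : Fin 3 → ℝ := fun i => ψ1 (Pi.single i 1) with hadef
  set b : Fin 3 → ℝ := fun i => ψ2 (Pi.single i 1) with hbdef
  have hsum_single : ∀ v : Fin 3 → ℝ, v = ∑ i, v i • (Pi.single i 1 : Fin 3 → ℝ) := by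
    intro v
    funext j
    simp [Finset.sum_apply, Pi.single_apply, mul_ite, Finset.sum_ite_eq]
  have hψsum : ∀ (ψ : (Fin 3 → ℝ) →ₗ[ℝ] ℝ) (v : Fin 3 → ℝ),
      ψ v = ∑ i, v i * ψ (Pi.single i 1) := by
    intro ψ v
    calc ψ v = ψ (∑ i, v i • (Pi.single i 1 : Fin 3 → ℝ)) := by rw [← hsum_single]
      _ = ∑ i, v i * ψ (Pi.single i 1) := by
        rw [map_sum]
        exact Finset.sum_congr rfl fun i _ => by rw [map_smul, smul_eq_mul]
  have hφeq : ∀ v w : Fin 3 → ℝ, φ (v, w) = ∑ i, v i * a i + ∑ i, w i * b i := by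
    intro v w
    have h0 : ((v, w) : (Fin 3 → ℝ) × (Fin 3 → ℝ)) = ((v, 0) : _ × _) + ((0, w) : _ × _) := by
      simp
    rw [h0, map_add]
    have h1 : φ ((v, 0) : _ × _) = ψ1 v := rfl
    have h2 : φ ((0, w) : _ × _) = ψ2 w := rfl
    rw [h1, h2, hψsum ψ1 v, hψsum ψ2 w]
  have hsup : ∀ x y : Fin 3 → ℝ,
      g (p, q) + ((∑ i, x i * a i + ∑ i, y i * b i)
        - (∑ i, p i * a i + ∑ i, q i * b i)) ≤ g (x, y) := by
    intro x y
    have h := hφ (x, y)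
    rwa [hφeq x y, hφeq p q] at h
  have hsing_mul : ∀ (v : Fin 3 → ℝ) (i : Fin 3),
      ∑ j, (Pi.single i (1:ℝ) : Fin 3 → ℝ) j * v j = v i := by
    intro v i
    simp [Pi.single_apply, ite_mul, Finset.sum_ite_eq]
  have hsingle_nonneg : ∀ (i j : Fin 3), (0:ℝ) ≤ (Pi.single i (1:ℝ) : Fin 3 → ℝ) j := by
    intro i j
    rw [Pi.single_apply]
    split <;> norm_num
  have ha0 : ∀ i, 0 ≤ a i := by
    intro i
    have h1 := hsup (fun j => p j - (Pi.single i (1:ℝ) : Fin 3 → ℝ) j) q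
    have h2 : g ((fun j => p j - (Pi.single i (1:ℝ) : Fin 3 → ℝ) j), q) ≤ g (p, q) := by
      apply hmono
      · intro j
        simp only
        linarith [hsingle_nonneg i j]
      · intro j; exact le_refl _
    have h3 : ∑ j, (p j - (Pi.single i (1:ℝ) : Fin 3 → ℝ) j) * a j = ∑ j, p j * a j - a i := by
      have : ∀ j, (p j - (Pi.single i (1:ℝ) : Fin 3 → ℝ) j) * a j = p j * a j - (Pi.single i (1:ℝ) : Fin 3 → ℝ) j * a j := by
        intro j; ring
      rw [Finset.sum_congr rfl fun j _ => this j, Finset.sum_sub_distrib, hsing_mul a i]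
    rw [h3] at h1
    linarith
  have hb0 : ∀ i, 0 ≤ b i := by
    intro i
    have h1 := hsup p (fun j => q j - (Pi.single i (1:ℝ) : Fin 3 → ℝ) j)
    have h2 : g (p, (fun j => q j - (Pi.single i (1:ℝ) : Fin 3 → ℝ) j)) ≤ g (p, q) := by
      apply hmono
      · intro j; exact le_refl _
      · intro j
        simp only
        linarith [hsingle_nonneg i j]
    have h3 : ∑ j, (q j - (Pi.single i (1:ℝ) : Fin 3 → ℝ) j) * b j = ∑ j, q j * b j - b i := by
      have : ∀ j, (q j - (Pi.single i (1:ℝ) : Fin 3 → ℝ) j) * b j = q j * b j - (Pi.single i (1:ℝ) : Fin 3 → ℝ) j * b j := by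
        intro j; ring
      rw [Finset.sum_congr rfl fun j _ => this j, Finset.sum_sub_distrib, hsing_mul b i]
    rw [h3] at h1
    linarith
  -- sorted-decreasing rearrangements of the subgradient coordinates
  set ρa : Equiv.Perm (Fin 3) := (Fin.revPerm : Equiv.Perm (Fin 3)).trans (Tuple.sort a) with hρadef
  set ρb : Equiv.Perm (Fin 3) := (Fin.revPerm : Equiv.Perm (Fin 3)).trans (Tuple.sort b) with hρbdef
  set a' : Fin 3 → ℝ := a ∘ ρa with ha'def
  set b' : Fin 3 → ℝ := b ∘ ρb with hb'def
  have ha'anti : Antitone a' := by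
    intro k l hkl
    have := Tuple.monotone_sort a (Fin.rev_le_rev.mpr hkl)
    simpa [ha'def, hρadef, Equiv.trans_apply] using this
  have hb'anti : Antitone b' := by
    intro k l hkl
    have := Tuple.monotone_sort b (Fin.rev_le_rev.mpr hkl)
    simpa [hb'def, hρbdef, Equiv.trans_apply] using this
  have ha'0 : ∀ i, 0 ≤ a' i := fun i => ha0 _
  have hb'0 : ∀ i, 0 ≤ b' i := fun i => hb0 _
  have hpanti : Antitone p := singularValues_antitone _
  have hqanti : Antitone q := singularValues_antitone _
  have hrearr_a : ∑ i, p i * a i ≤ ∑ i, p i * a' i := by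
    have hmv : Monovary a' p := ha'anti.monovary hpanti
    have h := hmv.sum_comp_perm_smul_le_sum_smul (σ := ρa.symm)
    simp only [smul_eq_mul] at h
    calc ∑ i, p i * a i = ∑ i, a' (ρa.symm i) * p i := by
          apply Finset.sum_congr rfl
          intro i _
          rw [ha'def, Function.comp_apply, Equiv.apply_symm_apply, mul_comm]
      _ ≤ ∑ i, a' i * p i := h
      _ = ∑ i, p i * a' i := Finset.sum_congr rfl fun i _ => mul_comm _ _
  have hrearr_b : ∑ i, q i * b i ≤ ∑ i, q i * b' i := by
    have hmv : Monovary b' q := hb'anti.monovary hqanti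
    have h := hmv.sum_comp_perm_smul_le_sum_smul (σ := ρb.symm)
    simp only [smul_eq_mul] at h
    calc ∑ i, q i * b i = ∑ i, b' (ρb.symm i) * q i := by
          apply Finset.sum_congr rfl
          intro i _
          rw [hb'def, Function.comp_apply, Equiv.apply_symm_apply, mul_comm]
      _ ≤ ∑ i, b' i * q i := h
      _ = ∑ i, q i * b' i := Finset.sum_congr rfl fun i _ => mul_comm _ _
  have key : ∀ x y : Fin 3 → ℝ,
      g (p, q) + ((∑ i, x i * a' i - ∑ i, p i * a' i)
        + (∑ i, y i * b' i - ∑ i, q i * b' i)) ≤ g (x, y) := by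
    intro x y
    have hgperm : g (x ∘ ρa.symm, y ∘ ρb.symm) = g (x, y) := hperm ρa.symm ρb.symm (x, y)
    have h1 := hsup (x ∘ ρa.symm) (y ∘ ρb.symm)
    rw [hgperm] at h1
    have hxs : ∑ i, (x ∘ ρa.symm) i * a i = ∑ i, x i * a' i := by
      calc ∑ i, (x ∘ ρa.symm) i * a i
          = ∑ i, (fun j => x j * a' j) (ρa.symm i) := by
            apply Finset.sum_congr rfl
            intro i _
            simp only [Function.comp_apply, ha'def, Equiv.apply_symm_apply]
        _ = ∑ i, x i * a' i := Equiv.sum_comp ρa.symm (fun j => x j * a' j)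
    have hys : ∑ i, (y ∘ ρb.symm) i * b i = ∑ i, y i * b' i := by
      calc ∑ i, (y ∘ ρb.symm) i * b i
          = ∑ i, (fun j => y j * b' j) (ρb.symm i) := by
            apply Finset.sum_congr rfl
            intro i _
            simp only [Function.comp_apply, hb'def, Equiv.apply_symm_apply]
        _ = ∑ i, y i * b' i := Equiv.sum_comp ρb.symm (fun j => y j * b' j)
    rw [hxs, hys] at h1
    linarith [hrearr_a, hrearr_b]
  -- Ky Fan type inequalities
  have hsubF : ∑ i, p i * a' i ≤ t * ∑ i, singularValues F₁ i * a' i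
      + (1 - t) * ∑ i, singularValues F₂ i * a' i := by
    have h1 := weighted_subadd a' ha'anti (ha'0 2) (t • F₁) ((1 - t) • F₂)
    rw [sv_smul t ht0 F₁, sv_smul (1 - t) (by linarith) F₂] at h1
    have e1 : ∑ i, a' i * p i = ∑ i, p i * a' i :=
      Finset.sum_congr rfl fun i _ => mul_comm _ _
    have e2 : ∑ i, a' i * (t * singularValues F₁ i) = t * ∑ i, singularValues F₁ i * a' i := by
      rw [Finset.mul_sum]
      exact Finset.sum_congr rfl fun i _ => by ring
    have e3 : ∑ i, a' i * ((1 - t) * singularValues F₂ i)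
        = (1 - t) * ∑ i, singularValues F₂ i * a' i := by
      rw [Finset.mul_sum]
      exact Finset.sum_congr rfl fun i _ => by ring
    rw [e1, e2, e3] at h1
    exact h1
  have hsubA : ∑ i, q i * b' i ≤ t * ∑ i, singularValues A₁ i * b' i
      + (1 - t) * ∑ i, singularValues A₂ i * b' i := by
    have h1 := weighted_subadd b' hb'anti (hb'0 2) (t • A₁) ((1 - t) • A₂)
    rw [sv_smul t ht0 A₁, sv_smul (1 - t) (by linarith) A₂] at h1
    have e1 : ∑ i, b' i * q i = ∑ i, q i * b' i :=
      Finset.sum_congr rfl fun i _ => mul_comm _ _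
    have e2 : ∑ i, b' i * (t * singularValues A₁ i) = t * ∑ i, singularValues A₁ i * b' i := by
      rw [Finset.mul_sum]
      exact Finset.sum_congr rfl fun i _ => by ring
    have e3 : ∑ i, b' i * ((1 - t) * singularValues A₂ i)
        = (1 - t) * ∑ i, singularValues A₂ i * b' i := by
      rw [Finset.mul_sum]
      exact Finset.sum_congr rfl fun i _ => by ring
    rw [e1, e2, e3] at h1
    exact h1
  have k1 := key (singularValues F₁) (singularValues A₁)
  have k2 := key (singularValues F₂) (singularValues A₂)
  have m1 := mul_le_mul_of_nonneg_left k1 ht0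
  have m2 := mul_le_mul_of_nonneg_left k2 (by linarith : (0:ℝ) ≤ 1 - t)
  nlinarith [m1, m2, hsubF, hsubA]
end

section
/- Let g : ℝ³ × ℝ³ → ℝ be convex, nondecreasing in each of its six scalar arguments, and strictly increasing in each of its first three arguments. Then the function Ŵ : ℝ³ → ℝ defined by Ŵ(h₁, h₂, h₃) = g(e^{h₁}, e^{h₂}, e^{h₃}, e^{−h₁}, e^{−h₂}, e^{−h₃}) is strictly convex: for all h ≠ h' in ℝ³ and all t ∈ (0,1), Ŵ(t·h + (1−t)·h') < t·Ŵ(h) + (1−t)·Ŵ(h'). -/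
/-- If `g : ℝ³ × ℝ³ → ℝ` is convex, nondecreasing in each of its six scalar arguments, and
strictly increasing in each of its first three arguments, then
`Ŵ(h) = g (e^{h₁}, e^{h₂}, e^{h₃}, e^{-h₁}, e^{-h₂}, e^{-h₃})` is strictly convex. -/
theorem strictConvex_log_parametrization_first
    (g : (Fin 3 → ℝ) × (Fin 3 → ℝ) → ℝ)
    (hconv : ConvexOn ℝ Set.univ g)
    (hmono : ∀ x y : (Fin 3 → ℝ) × (Fin 3 → ℝ),
      (∀ i, x.1 i ≤ y.1 i) → (∀ i, x.2 i ≤ y.2 i) → g x ≤ g y)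
    (hstrict : ∀ (i : Fin 3) (x : (Fin 3 → ℝ) × (Fin 3 → ℝ)) (c : ℝ),
      x.1 i < c → g x < g (Function.update x.1 i c, x.2)) :
    ∀ h h' : Fin 3 → ℝ, h ≠ h' → ∀ t : ℝ, 0 < t → t < 1 →
      g (fun i => Real.exp ((t • h + (1 - t) • h') i),
         fun i => Real.exp (-((t • h + (1 - t) • h') i))) <
        t * g (fun i => Real.exp (h i), fun i => Real.exp (-h i)) +
          (1 - t) * g (fun i => Real.exp (h' i), fun i => Real.exp (-h' i)) := by
  intro h h' hne t ht0 ht1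
  obtain ⟨j, hj⟩ : ∃ j, h j ≠ h' j := Function.ne_iff.mp hne
  set u : Fin 3 → ℝ := t • h + (1 - t) • h' with hu
  have ht1' : 0 ≤ 1 - t := by linarith
  have hsum : t + (1 - t) = 1 := by ring
  -- componentwise exp convexity
  have hA : ∀ i, Real.exp (u i) ≤ t * Real.exp (h i) + (1 - t) * Real.exp (h' i) := by
    intro i
    have := convexOn_exp.2 (Set.mem_univ (h i)) (Set.mem_univ (h' i)) ht0.le ht1' hsum
    simpa [hu] using this
  have hAj : Real.exp (u j) < t * Real.exp (h j) + (1 - t) * Real.exp (h' j) := by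
    have := strictConvexOn_exp.2 (Set.mem_univ (h j)) (Set.mem_univ (h' j)) hj ht0
      (by linarith) hsum
    simpa [hu] using this
  have hB : ∀ i, Real.exp (-u i) ≤ t * Real.exp (-h i) + (1 - t) * Real.exp (-h' i) := by
    intro i
    have := convexOn_exp.2 (Set.mem_univ (-h i)) (Set.mem_univ (-h' i)) ht0.le ht1' hsum
    simpa [hu, mul_neg, neg_add, add_comm] using this
  set a : Fin 3 → ℝ := fun i => t * Real.exp (h i) + (1 - t) * Real.exp (h' i) with ha
  set b : Fin 3 → ℝ := fun i => t * Real.exp (-h i) + (1 - t) * Real.exp (-h' i) with hb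
  set x : (Fin 3 → ℝ) × (Fin 3 → ℝ) :=
    (fun i => Real.exp (u i), fun i => Real.exp (-u i)) with hx
  have step1 : g x < g (Function.update x.1 j (a j), x.2) :=
    hstrict j x (a j) (by simpa [hx, ha] using hAj)
  have step2 : g (Function.update x.1 j (a j), x.2) ≤ g (a, b) := by
    apply hmono
    · intro i
      rcases eq_or_ne i j with rfl | hij
      · simp
      · simpa [Function.update_of_ne hij, hx, ha] using hA i
    · intro i
      simpa [hx, hb] using hB i
  have step3 : g (a, b) ≤ t * g (fun i => Real.exp (h i), fun i => Real.exp (-h i)) +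
      (1 - t) * g (fun i => Real.exp (h' i), fun i => Real.exp (-h' i)) := by
    have := hconv.2 (Set.mem_univ ((fun i => Real.exp (h i), fun i => Real.exp (-h i)) :
        (Fin 3 → ℝ) × (Fin 3 → ℝ)))
      (Set.mem_univ ((fun i => Real.exp (h' i), fun i => Real.exp (-h' i)) :
        (Fin 3 → ℝ) × (Fin 3 → ℝ))) ht0.le ht1' hsum
    have heq : (t • ((fun i => Real.exp (h i), fun i => Real.exp (-h i)) :
        (Fin 3 → ℝ) × (Fin 3 → ℝ)) +
        (1 - t) • (fun i => Real.exp (h' i), fun i => Real.exp (-h' i))) = (a, b) := by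
      ext i <;> simp [ha, hb]
    rwa [heq] at this
  calc g x < g (Function.update x.1 j (a j), x.2) := step1
    _ ≤ g (a, b) := step2
    _ ≤ _ := step3
end

section
/- Let p, q ∈ [1, ∞) and let Ψ : ℝ² → ℝ be convex, nondecreasing in each of its two arguments, and strictly increasing in its first argument. Then the function ℝ³ → ℝ given by (h₁, h₂, h₃) ↦ Ψ( (e^{p h₁} + e^{p h₂} + e^{p h₃})^{1/p}, (e^{−q h₁} + e^{−q h₂} + e^{−q h₃})^{1/q} ) is strictly convex on ℝ³. -/
open Real Finset

/-- Strict midpoint-type convexity of `h ↦ (∑ e^{p hₖ})^{1/p}`. -/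
lemma Knorm_strict (p : ℝ) (hp : 1 ≤ p) (x y : Fin 3 → ℝ) (hxy : x ≠ y)
    (a b : ℝ) (ha : 0 < a) (hb : 0 < b) (hab : a + b = 1) :
    (∑ k, Real.exp (p * (a * x k + b * y k))) ^ (1 / p)
      < a * (∑ k, Real.exp (p * x k)) ^ (1 / p)
        + b * (∑ k, Real.exp (p * y k)) ^ (1 / p) := by
  have hp0 : 0 < p := lt_of_lt_of_le one_pos hp
  have hle : ∀ k, Real.exp (p * (a * x k + b * y k)) ≤ (a * Real.exp (x k) + b * Real.exp (y k)) ^ p := by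
    intro k
    rw [mul_comm p, Real.exp_mul]
    exact Real.rpow_le_rpow (Real.exp_pos _).le
      (convexOn_exp.2 (Set.mem_univ _) (Set.mem_univ _) ha.le hb.le hab) hp0.le
  obtain ⟨k0, hk0⟩ : ∃ k, x k ≠ y k := Function.ne_iff.mp hxy
  have hlt : Real.exp (p * (a * x k0 + b * y k0)) < (a * Real.exp (x k0) + b * Real.exp (y k0)) ^ p := by
    rw [mul_comm p, Real.exp_mul]
    exact Real.rpow_lt_rpow (Real.exp_pos _).le
      (strictConvexOn_exp.2 (Set.mem_univ _) (Set.mem_univ _) hk0 ha hb hab) hp0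
  have hsum : (∑ k, Real.exp (p * (a * x k + b * y k)))
      < ∑ k, (a * Real.exp (x k) + b * Real.exp (y k)) ^ p :=
    Finset.sum_lt_sum (fun k _ => hle k) ⟨k0, Finset.mem_univ _, hlt⟩
  have h1 : (∑ k, Real.exp (p * (a * x k + b * y k))) ^ (1 / p)
      < (∑ k, (a * Real.exp (x k) + b * Real.exp (y k)) ^ p) ^ (1 / p) :=
    Real.rpow_lt_rpow (Finset.sum_nonneg fun k _ => (Real.exp_pos _).le) hsum
      (by positivity)
  refine h1.trans_le ?_
  have h2 := Real.Lp_add_le_of_nonneg (s := Finset.univ)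
    (f := fun k => a * Real.exp (x k)) (g := fun k => b * Real.exp (y k)) hp
    (fun i _ => by positivity) (fun i _ => by positivity)
  refine h2.trans_eq ?_
  have key : ∀ (c : ℝ) (z : Fin 3 → ℝ), 0 < c →
      (∑ k, (c * Real.exp (z k)) ^ p) ^ (1 / p) = c * (∑ k, Real.exp (p * z k)) ^ (1 / p) := by
    intro c z hc
    have hkey : ∀ k, (c * Real.exp (z k)) ^ p = c ^ p * Real.exp (p * z k) := by
      intro k
      rw [Real.mul_rpow hc.le (Real.exp_pos _).le, mul_comm p, Real.exp_mul]
    simp only [hkey, ← Finset.mul_sum]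
    rw [Real.mul_rpow (by positivity) (Finset.sum_nonneg fun k _ => (Real.exp_pos _).le),
      ← Real.rpow_mul hc.le, mul_one_div, div_self (ne_of_gt hp0), Real.rpow_one]
  rw [key a x ha, key b y hb]

lemma Knorm_le (p : ℝ) (hp : 1 ≤ p) (x y : Fin 3 → ℝ)
    (a b : ℝ) (ha : 0 < a) (hb : 0 < b) (hab : a + b = 1) :
    (∑ k, Real.exp (p * (a * x k + b * y k))) ^ (1 / p)
      ≤ a * (∑ k, Real.exp (p * x k)) ^ (1 / p)
        + b * (∑ k, Real.exp (p * y k)) ^ (1 / p) := by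
  by_cases hxy : x = y
  · subst hxy
    have h : ∀ k, a * x k + b * x k = x k := fun k => by
      rw [← add_mul, hab, one_mul]
    simp only [h, ← add_mul, hab, one_mul, le_refl]
  · exact (Knorm_strict p hp x y hxy a b ha hb hab).le

/-- For `p, q ∈ [1, ∞)` and `Ψ : ℝ² → ℝ` convex, nondecreasing in both arguments and strictly
increasing in its first argument, the map
`h ↦ Ψ ((Σ e^{p hₖ})^{1/p}, (Σ e^{-q hₖ})^{1/q})` is strictly convex on ℝ³. -/
theorem schatten_invariant_strictConvex_log
    (p q : ℝ) (hp : 1 ≤ p) (hq : 1 ≤ q)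
    (Ψ : ℝ × ℝ → ℝ)
    (hconv : ConvexOn ℝ Set.univ Ψ)
    (hmono : ∀ a b : ℝ × ℝ, a.1 ≤ b.1 → a.2 ≤ b.2 → Ψ a ≤ Ψ b)
    (hstrict : ∀ (a : ℝ × ℝ) (c : ℝ), a.1 < c → Ψ a < Ψ (c, a.2)) :
    StrictConvexOn ℝ Set.univ (fun h : Fin 3 → ℝ =>
      Ψ ((∑ k, Real.exp (p * h k)) ^ (1 / p), (∑ k, Real.exp (-(q * h k))) ^ (1 / q))) := by
  refine ⟨convex_univ, ?_⟩
  intro x _ y _ hxy a b ha hb hab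
  simp only [Pi.add_apply, Pi.smul_apply, smul_eq_mul]
  have hm1 := Knorm_strict p hp x y hxy a b ha hb hab
  have hm2 := Knorm_le q hq (-x) (-y) a b ha hb hab
  have e1 : ∀ k : Fin 3, q * (a * (-x) k + b * (-y) k) = -(q * (a * x k + b * y k)) := by
    intro k; simp only [Pi.neg_apply]; ring
  have e2 : ∀ k : Fin 3, q * (-x) k = -(q * x k) := by
    intro k; simp only [Pi.neg_apply]; ring
  have e3 : ∀ k : Fin 3, q * (-y) k = -(q * y k) := by
    intro k; simp only [Pi.neg_apply]; ring
  simp only [e1, e2, e3] at hm2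
  calc Ψ ((∑ k, Real.exp (p * (a * x k + b * y k))) ^ (1 / p),
          (∑ k, Real.exp (-(q * (a * x k + b * y k)))) ^ (1 / q))
      ≤ Ψ ((∑ k, Real.exp (p * (a * x k + b * y k))) ^ (1 / p),
          a * (∑ k, Real.exp (-(q * x k))) ^ (1 / q)
            + b * (∑ k, Real.exp (-(q * y k))) ^ (1 / q)) :=
        hmono _ _ le_rfl hm2
    _ < Ψ (a * (∑ k, Real.exp (p * x k)) ^ (1 / p) + b * (∑ k, Real.exp (p * y k)) ^ (1 / p),
          a * (∑ k, Real.exp (-(q * x k))) ^ (1 / q)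
            + b * (∑ k, Real.exp (-(q * y k))) ^ (1 / q)) := hstrict _ _ hm1
    _ ≤ a * Ψ ((∑ k, Real.exp (p * x k)) ^ (1 / p), (∑ k, Real.exp (-(q * x k))) ^ (1 / q))
          + b * Ψ ((∑ k, Real.exp (p * y k)) ^ (1 / p), (∑ k, Real.exp (-(q * y k))) ^ (1 / q)) := by
        have h := hconv.2
          (Set.mem_univ ((∑ k, Real.exp (p * x k)) ^ (1 / p), (∑ k, Real.exp (-(q * x k))) ^ (1 / q)))
          (Set.mem_univ ((∑ k, Real.exp (p * y k)) ^ (1 / p), (∑ k, Real.exp (-(q * y k))) ^ (1 / q)))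
          ha.le hb.le hab
        simpa [Prod.smul_mk, Prod.mk_add_mk, smul_eq_mul] using h
end

section
/- Define σ₁₂ : (0, ∞) → ℝ by σ₁₂(γ) = [ (2 + γ² + γ√(4 + γ²))^{1/4} − (2 + γ² − γ√(4 + γ²))^{1/4} ] / ( 2^{5/4} · √(4 + γ²) ). Then σ₁₂(γ) > 0 for all γ > 0, σ₁₂(γ) tends to 0 as γ → ∞, and consequently σ₁₂ is not monotonically nondecreasing on (0, ∞): there exist 0 < γ₁ < γ₂ with σ₁₂(γ₁) > σ₁₂(γ₂). -/
/-- The Cauchy shear-stress response in simple shear of the incompressible one-term Ogden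
model with exponent `p = 1/2`. -/
noncomputable def shearStressOgdenHalf (γ : ℝ) : ℝ :=
  ((2 + γ ^ 2 + γ * Real.sqrt (4 + γ ^ 2)) ^ ((1 : ℝ) / 4) -
      (2 + γ ^ 2 - γ * Real.sqrt (4 + γ ^ 2)) ^ ((1 : ℝ) / 4)) /
    ((2 : ℝ) ^ ((5 : ℝ) / 4) * Real.sqrt (4 + γ ^ 2))

open Real Filter

lemma ogden_B_pos (γ : ℝ) : 0 < 2 + γ ^ 2 - γ * Real.sqrt (4 + γ ^ 2) := by
  have h4 : (0:ℝ) < 4 + γ ^ 2 := by positivity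
  have hsq : Real.sqrt (4 + γ ^ 2) ^ 2 = 4 + γ ^ 2 := Real.sq_sqrt h4.le
  have h1 : (γ * Real.sqrt (4 + γ ^ 2)) ^ 2 < (2 + γ ^ 2) ^ 2 := by nlinarith
  have h2 := lt_of_pow_lt_pow_left₀ 2 (by positivity : (0:ℝ) ≤ 2 + γ ^ 2) h1
  have h3 : γ * Real.sqrt (4 + γ ^ 2) ≤ |γ * Real.sqrt (4 + γ ^ 2)| := le_abs_self _
  calc (0:ℝ) < (2 + γ ^ 2) - |γ * Real.sqrt (4 + γ ^ 2)| := by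
        have := abs_lt_of_sq_lt_sq' h1 (by positivity)
        linarith [abs_lt.2 ⟨this.1, this.2⟩] 
    _ ≤ 2 + γ ^ 2 - γ * Real.sqrt (4 + γ ^ 2) := by linarith

lemma ogden_pos (γ : ℝ) (hγ : 0 < γ) : 0 < shearStressOgdenHalf γ := by
  have h4 : (0:ℝ) < 4 + γ ^ 2 := by positivity
  have hs : 0 < Real.sqrt (4 + γ ^ 2) := Real.sqrt_pos.2 h4
  have hB := ogden_B_pos γ
  have hAB : 2 + γ ^ 2 - γ * Real.sqrt (4 + γ ^ 2) <
      2 + γ ^ 2 + γ * Real.sqrt (4 + γ ^ 2) := by nlinarith [mul_pos hγ hs]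
  have hnum := Real.rpow_lt_rpow hB.le hAB (by norm_num : (0:ℝ) < 1/4)
  have hden : 0 < (2:ℝ) ^ ((5:ℝ)/4) * Real.sqrt (4 + γ ^ 2) :=
    mul_pos (Real.rpow_pos_of_pos two_pos _) hs
  exact div_pos (by linarith) hden

lemma ogden_bound (γ : ℝ) (hγ : 0 ≤ γ) :
    shearStressOgdenHalf γ ≤ (1/2) * (4 + γ ^ 2) ^ (-(1/4) : ℝ) := by
  have h4 : (0:ℝ) < 4 + γ ^ 2 := by positivity
  have hs0 : 0 ≤ Real.sqrt (4 + γ ^ 2) := Real.sqrt_nonneg _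
  have hden : 0 < (2:ℝ) ^ ((5:ℝ)/4) * Real.sqrt (4 + γ ^ 2) :=
    mul_pos (Real.rpow_pos_of_pos two_pos _) (Real.sqrt_pos.2 h4)
  rw [shearStressOgdenHalf, div_le_iff₀ hden]
  have hγle : γ ≤ Real.sqrt (4 + γ ^ 2) := by
    nth_rewrite 1 [← Real.sqrt_sq hγ]
    exact Real.sqrt_le_sqrt (by nlinarith)
  have hγs : γ * Real.sqrt (4 + γ ^ 2) ≤ 4 + γ ^ 2 := by
    calc γ * Real.sqrt (4 + γ ^ 2) ≤ Real.sqrt (4 + γ ^ 2) * Real.sqrt (4 + γ ^ 2) :=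
          mul_le_mul_of_nonneg_right hγle hs0
      _ = 4 + γ ^ 2 := Real.mul_self_sqrt h4.le
  have hA : 2 + γ ^ 2 + γ * Real.sqrt (4 + γ ^ 2) ≤ 2 * (4 + γ ^ 2) := by linarith
  have hA0 : (0:ℝ) ≤ 2 + γ ^ 2 + γ * Real.sqrt (4 + γ ^ 2) := by positivity
  have step1 : (2 + γ ^ 2 + γ * Real.sqrt (4 + γ ^ 2)) ^ ((1:ℝ)/4) -
      (2 + γ ^ 2 - γ * Real.sqrt (4 + γ ^ 2)) ^ ((1:ℝ)/4)
      ≤ (2 * (4 + γ ^ 2)) ^ ((1:ℝ)/4) := by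
    have h1 := Real.rpow_le_rpow hA0 hA (by norm_num : (0:ℝ) ≤ 1/4)
    have h2 : (0:ℝ) ≤ (2 + γ ^ 2 - γ * Real.sqrt (4 + γ ^ 2)) ^ ((1:ℝ)/4) :=
      Real.rpow_nonneg (ogden_B_pos γ).le _
    linarith
  refine step1.trans (le_of_eq ?_)
  rw [show ((1:ℝ)/2) = (2:ℝ) ^ (-1:ℝ) by rw [Real.rpow_neg_one]; norm_num]
  rw [Real.mul_rpow (by norm_num) h4.le, Real.sqrt_eq_rpow]
  rw [mul_mul_mul_comm, ← Real.rpow_add two_pos, ← Real.rpow_add h4]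
  norm_num

/-- The shear stress `σ₁₂` is positive for `γ > 0`, tends to `0` as `γ → ∞`, and hence is not
monotonically nondecreasing on `(0, ∞)`. -/
theorem shearStressOgdenHalf_not_monotone :
    (∀ γ : ℝ, 0 < γ → 0 < shearStressOgdenHalf γ) ∧
      Filter.Tendsto shearStressOgdenHalf Filter.atTop (nhds 0) ∧
      ∃ γ₁ γ₂ : ℝ, 0 < γ₁ ∧ γ₁ < γ₂ ∧ shearStressOgdenHalf γ₂ < shearStressOgdenHalf γ₁ := by
  have hpos : ∀ γ : ℝ, 0 < γ → 0 < shearStressOgdenHalf γ := fun γ hγ => ogden_pos γ hγ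
  have hlim : Tendsto shearStressOgdenHalf atTop (nhds 0) := by
    have h1 : Tendsto (fun γ : ℝ => 4 + γ ^ 2) atTop atTop := by
      apply tendsto_atTop_add_const_left
      exact tendsto_pow_atTop two_ne_zero
    have h2 := (tendsto_rpow_neg_atTop (by norm_num : (0:ℝ) < 1/4)).comp h1
    have h3 : Tendsto (fun γ : ℝ => (1/2) * (4 + γ ^ 2) ^ (-(1/4) : ℝ)) atTop (nhds 0) := by
      have := h2.const_mul (1/2 : ℝ)
      simpa [Function.comp] using this
    refine tendsto_of_tendsto_of_tendsto_of_le_of_le' tendsto_const_nhds h3 ?_ ?_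
    · filter_upwards [eventually_gt_atTop (0:ℝ)] with γ hγ
      exact (hpos γ hγ).le
    · filter_upwards [eventually_ge_atTop (0:ℝ)] with γ hγ
      exact ogden_bound γ hγ
  refine ⟨hpos, hlim, ?_⟩
  have h1 := hpos 1 one_pos
  have hev : ∀ᶠ γ in atTop, shearStressOgdenHalf γ < shearStressOgdenHalf 1 :=
    hlim.eventually_lt_const h1
  obtain ⟨γ₂, hγ₂lt, hγ₂gt⟩ := (hev.and (eventually_gt_atTop (1:ℝ))).exists
  exact ⟨1, γ₂, one_pos, hγ₂gt, hγ₂lt⟩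
end

section
/- Let f : ℝ² → ℝ be differentiable, strictly convex, and symmetric in the sense that f(x, y) = f(y, x) for all x, y ∈ ℝ. Then for all (x, y) ∈ ℝ² with x ≠ y, one has (∂₁f(x, y) − ∂₂f(x, y)) · (x − y) > 0, where ∂₁f and ∂₂f denote the partial derivatives of f with respect to its first and second argument. -/
/-- Gradient strict monotonicity for a strictly convex differentiable function on `ℝ × ℝ`. -/
lemma strictConvex_fderiv_mono
    (f : ℝ × ℝ → ℝ) (hdiff : Differentiable ℝ f)
    (hconv : StrictConvexOn ℝ Set.univ f)
    (a b : ℝ × ℝ) (hab : a ≠ b) :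
    fderiv ℝ f a (b - a) < fderiv ℝ f b (b - a) := by
  set v : ℝ × ℝ := b - a with hv
  have hv0 : v ≠ 0 := sub_ne_zero.mpr (Ne.symm hab)
  set g : ℝ → ℝ := fun t => f (a + t • v) with hg
  have hgconv : StrictConvexOn ℝ (Set.univ : Set ℝ) g := by
    refine ⟨convex_univ, ?_⟩
    intro s _ t _ hst μ ν hμ hν hμν
    have hne : a + s • v ≠ a + t • v := by
      intro h
      apply hst
      have := add_left_cancel h
      exact smul_left_injective ℝ hv0 this
    have key := hconv.2 (Set.mem_univ (a + s • v)) (Set.mem_univ (a + t • v)) hne hμ hν hμν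
    have hμνa : μ • a + ν • a = a := by
      rw [← add_smul, hμν, one_smul]
    have : μ • (a + s • v) + ν • (a + t • v) = a + (μ * s + ν * t) • v := by
      calc μ • (a + s • v) + ν • (a + t • v)
          = (μ • a + ν • a) + (μ * s + ν * t) • v := by
            rw [smul_add, smul_add, add_smul, smul_smul, smul_smul]; abel
        _ = a + (μ * s + ν * t) • v := by rw [hμνa]
    rw [this] at key
    simpa [hg] using key
  have hderiv : ∀ t : ℝ, HasDerivAt g (fderiv ℝ f (a + t • v) v) t := by
    intro t
    have h1 : HasDerivAt (fun t : ℝ => a + t • v) v t := by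
      simpa using ((hasDerivAt_id t).smul_const v).const_add a
    exact ((hdiff (a + t • v)).hasFDerivAt.comp_hasDerivAt t h1)
  have h01 : (0 : ℝ) < 1 := one_pos
  have h0 := hgconv.lt_slope_of_hasDerivAt (Set.mem_univ 0) (Set.mem_univ 1) h01 (hderiv 0)
  have h1 := hgconv.slope_lt_of_hasDerivAt (Set.mem_univ 0) (Set.mem_univ 1) h01 (hderiv 1)
  have h2 := h0.trans h1
  have hab' : a + (1:ℝ) • v = b := by simp [hv]
  have ha0 : a + (0:ℝ) • v = a := by simp
  rw [ha0, hab'] at h2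
  exact h2

/-- For a differentiable, strictly convex and symmetric function `f : ℝ² → ℝ`, the difference
of its partial derivatives has the same sign as the difference of the arguments:
`(∂₁f(x,y) - ∂₂f(x,y)) (x - y) > 0` whenever `x ≠ y`. -/
theorem symm_strictConvex_partial_deriv_diff
    (f : ℝ × ℝ → ℝ)
    (hdiff : Differentiable ℝ f)
    (hconv : StrictConvexOn ℝ Set.univ f)
    (hsymm : ∀ x y : ℝ, f (x, y) = f (y, x))
    (x y : ℝ) (hxy : x ≠ y) :
    0 < (fderiv ℝ f (x, y) (1, 0) - fderiv ℝ f (x, y) (0, 1)) * (x - y) := by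
  set σ : (ℝ × ℝ) ≃L[ℝ] (ℝ × ℝ) := ContinuousLinearEquiv.prodComm ℝ ℝ ℝ with hσ
  have hfσ : f ∘ σ = f := by
    funext p
    simpa [hσ, Prod.swap] using (hsymm p.2 p.1)
  -- fderiv of f at any point p equals fderiv of f at σ p composed with σ
  have hswap : ∀ p : ℝ × ℝ, ∀ w : ℝ × ℝ,
      fderiv ℝ f p w = fderiv ℝ f (σ p) (σ w) := by
    intro p w
    have h1 : fderiv ℝ (f ∘ σ) p = (fderiv ℝ f (σ p)).comp (σ : (ℝ × ℝ) →L[ℝ] ℝ × ℝ) := by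
      rw [fderiv_comp p (hdiff (σ p)) σ.differentiableAt]
      congr 1
      exact σ.fderiv
    have := congrArg (fun L => L w) h1
    simpa [hfσ] using this
  have hmono := strictConvex_fderiv_mono f hdiff hconv (x, y) (y, x)
    (by simp [Prod.ext_iff]; exact fun h => absurd h hxy)
  have hv : ((y, x) : ℝ × ℝ) - (x, y) = (y - x, x - y) := by simp [Prod.ext_iff]
  rw [hv] at hmono
  -- rewrite the RHS derivative using symmetry
  have hb : fderiv ℝ f (y, x) (y - x, x - y) = fderiv ℝ f (x, y) (x - y, y - x) := by
    have := hswap (y, x) (y - x, x - y)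
    simpa [hσ] using this
  rw [hb] at hmono
  -- express both sides via partials
  have hlin : ∀ u v : ℝ, fderiv ℝ f (x, y) (u, v)
      = u * fderiv ℝ f (x, y) (1, 0) + v * fderiv ℝ f (x, y) (0, 1) := by
    intro u v
    have : ((u, v) : ℝ × ℝ) = u • (1, 0) + v • (0, 1) := by simp [Prod.ext_iff]
    rw [this, map_add, map_smul, map_smul]
    simp [smul_eq_mul]
  rw [hlin (y - x) (x - y), hlin (x - y) (y - x)] at hmono
  nlinarith [hmono]
end

section
/- Let f : ℝ² → ℝ be differentiable, strictly convex, and satisfy the reflection symmetry f(x, y) = f(−x−y, y) for all x, y ∈ ℝ. Then for all (x, y) ∈ ℝ² with 2x + y ≠ 0, one has ∂₁f(x, y) · (2x + y) > 0, where ∂₁f denotes the partial derivative of f with respect to its first argument. -/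
/-- For a differentiable, strictly convex function `f : ℝ² → ℝ` with the reflection symmetry
`f(x, y) = f(-x-y, y)`, one has `∂₁f(x,y) · (2x + y) > 0` whenever `2x + y ≠ 0`. -/
theorem reflection_strictConvex_partial_deriv
    (f : ℝ × ℝ → ℝ)
    (hdiff : Differentiable ℝ f)
    (hconv : StrictConvexOn ℝ Set.univ f)
    (hsymm : ∀ x y : ℝ, f (x, y) = f (-x - y, y))
    (x y : ℝ) (hxy : 2 * x + y ≠ 0) :
    0 < fderiv ℝ f (x, y) (1, 0) * (2 * x + y) := by
  set g : ℝ → ℝ := fun t => f (t, y) with hg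
  have hgderiv : ∀ t : ℝ, HasDerivAt g (fderiv ℝ f (t, y) (1, 0)) t := by
    intro t
    have hc : HasDerivAt (fun s : ℝ => ((s, y) : ℝ × ℝ)) (1, 0) t := by
      have h1 : HasDerivAt (fun s : ℝ => s) 1 t := hasDerivAt_id t
      have h2 : HasDerivAt (fun _ : ℝ => y) 0 t := hasDerivAt_const t y
      exact HasDerivAt.prodMk h1 h2
    exact (hdiff (t, y)).hasFDerivAt.comp_hasDerivAt t hc
  have hgconv : StrictConvexOn ℝ Set.univ g := by
    refine ⟨convex_univ, fun p _ q _ hpq la lb hla hlb hsum => ?_⟩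
    have hne : ((p, y) : ℝ × ℝ) ≠ (q, y) := by
      simp [Prod.ext_iff, hpq]
    have := hconv.2 (Set.mem_univ ((p, y) : ℝ × ℝ)) (Set.mem_univ ((q, y) : ℝ × ℝ))
      hne hla hlb hsum
    have heq : la • ((p, y) : ℝ × ℝ) + lb • (q, y) = (la • p + lb • q, y) := by
      have hy : la * y + lb * y = y := by rw [← add_mul, hsum, one_mul]
      simp [Prod.ext_iff, Prod.smul_mk, hy]
    rw [heq] at this
    exact this
  have hgsymm : g x = g (-x - y) := hsymm x y
  have hdiffg : DifferentiableAt ℝ g x := (hgderiv x).differentiableAt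
  rcases lt_or_gt_of_ne hxy with h | h
  · -- 2x + y < 0, so x < -x - y
    have hlt : x < -x - y := by linarith
    have h1 : deriv g x < slope g x (-x - y) :=
      hgconv.deriv_lt_slope (Set.mem_univ x) (Set.mem_univ (-x - y)) hlt hdiffg
    have h2 : slope g x (-x - y) = 0 := by
      rw [slope_def_field, hgsymm]
      simp
    rw [(hgderiv x).deriv] at h1
    rw [h2] at h1
    exact mul_pos_of_neg_of_neg h1 h
  · -- 2x + y > 0, so -x - y < x
    have hlt : -x - y < x := by linarith
    have h1 : slope g (-x - y) x < deriv g x :=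
      hgconv.slope_lt_deriv (Set.mem_univ (-x - y)) (Set.mem_univ x) hlt hdiffg
    have h2 : slope g (-x - y) x = 0 := by
      rw [slope_def_field, hgsymm]
      simp
    rw [(hgderiv x).deriv] at h1
    rw [h2] at h1
    exact mul_pos h1 h
end

section
/- Let g : ℝ³ × ℝ³ → ℝ be convex, nondecreasing in each of its six scalar arguments, and strictly increasing in each of its last three arguments. Then the function Ŵ : ℝ³ → ℝ defined by Ŵ(h₁, h₂, h₃) = g(e^{h₁}, e^{h₂}, e^{h₃}, e^{−h₁}, e^{−h₂}, e^{−h₃}) is strictly convex: for all h ≠ h' in ℝ³ and all t ∈ (0,1), Ŵ(t·h + (1−t)·h') < t·Ŵ(h) + (1−t)·Ŵ(h'). -/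
/-- If `g : ℝ³ × ℝ³ → ℝ` is convex, nondecreasing in each of its six scalar arguments, and
strictly increasing in each of its last three arguments, then
`Ŵ(h) = g (e^{h₁}, e^{h₂}, e^{h₃}, e^{-h₁}, e^{-h₂}, e^{-h₃})` is strictly convex. -/
theorem strictConvex_log_parametrization_last
    (g : (Fin 3 → ℝ) × (Fin 3 → ℝ) → ℝ)
    (hconv : ConvexOn ℝ Set.univ g)
    (hmono : ∀ x y : (Fin 3 → ℝ) × (Fin 3 → ℝ),
      (∀ i, x.1 i ≤ y.1 i) → (∀ i, x.2 i ≤ y.2 i) → g x ≤ g y)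
    (hstrict : ∀ (i : Fin 3) (x : (Fin 3 → ℝ) × (Fin 3 → ℝ)) (c : ℝ),
      x.2 i < c → g x < g (x.1, Function.update x.2 i c)) :
    ∀ h h' : Fin 3 → ℝ, h ≠ h' → ∀ t : ℝ, 0 < t → t < 1 →
      g (fun i => Real.exp ((t • h + (1 - t) • h') i),
         fun i => Real.exp (-((t • h + (1 - t) • h') i))) <
        t * g (fun i => Real.exp (h i), fun i => Real.exp (-h i)) +
          (1 - t) * g (fun i => Real.exp (h' i), fun i => Real.exp (-h' i)) := by
  intro h h' hne t ht ht1
  obtain ⟨j, hj⟩ := Function.ne_iff.mp hne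
  have ht' : (0:ℝ) < 1 - t := by linarith
  set m : Fin 3 → ℝ := t • h + (1 - t) • h' with hm
  have hmi : ∀ i, m i = t * h i + (1 - t) * h' i := by
    intro i; simp [hm, mul_comm]
  set A : Fin 3 → ℝ := fun i => t * Real.exp (h i) + (1 - t) * Real.exp (h' i) with hA
  set B : Fin 3 → ℝ := fun i => t * Real.exp (-h i) + (1 - t) * Real.exp (-h' i) with hB
  have hE : ∀ i, Real.exp (m i) ≤ A i := by
    intro i
    have := convexOn_exp.2 (Set.mem_univ (h i)) (Set.mem_univ (h' i)) ht.le ht'.le (by ring)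
    simpa [hmi i, smul_eq_mul] using this
  have hF : ∀ i, Real.exp (-m i) ≤ B i := by
    intro i
    have := convexOn_exp.2 (Set.mem_univ (-h i)) (Set.mem_univ (-h' i)) ht.le ht'.le (by ring)
    have h2 : -m i = t * (-h i) + (1 - t) * (-h' i) := by rw [hmi i]; ring
    simpa [h2, smul_eq_mul] using this
  have hFj : Real.exp (-m j) < B j := by
    have hne' : -h j ≠ -h' j := fun hc => hj (by linarith [neg_injective hc])
    have := strictConvexOn_exp.2 (Set.mem_univ (-h j)) (Set.mem_univ (-h' j)) hne' ht ht' (by ring)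
    have h2 : -m j = t * (-h j) + (1 - t) * (-h' j) := by rw [hmi j]; ring
    simpa [h2, smul_eq_mul] using this
  -- step 1: monotone step, keeping coordinate j of the second component fixed
  set F : Fin 3 → ℝ := fun i => Real.exp (-m i) with hFdef
  have step1 : g (fun i => Real.exp (m i), F) ≤ g (A, Function.update B j (F j)) := by
    apply hmono
    · intro i; exact hE i
    · intro i
      by_cases hij : i = j
      · subst hij; simp
      · show F i ≤ Function.update B j (F j) i; rw [Function.update_of_ne hij]; exact hF i
  have step2 : g (A, Function.update B j (F j)) < g (A, B) := by
    have := hstrict j (A, Function.update B j (F j)) (B j) (by simpa using hFj)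
    simpa [Function.update_idem, Function.update_eq_self] using this
  have step3 : g (A, B) ≤ t * g (fun i => Real.exp (h i), fun i => Real.exp (-h i)) +
      (1 - t) * g (fun i => Real.exp (h' i), fun i => Real.exp (-h' i)) := by
    have := hconv.2 (Set.mem_univ ((fun i => Real.exp (h i), fun i => Real.exp (-h i)) :
        (Fin 3 → ℝ) × (Fin 3 → ℝ)))
      (Set.mem_univ ((fun i => Real.exp (h' i), fun i => Real.exp (-h' i)) :
        (Fin 3 → ℝ) × (Fin 3 → ℝ))) ht.le ht'.le (by ring)
    have heq : (t • ((fun i => Real.exp (h i), fun i => Real.exp (-h i)) :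
        (Fin 3 → ℝ) × (Fin 3 → ℝ)) +
        (1 - t) • (fun i => Real.exp (h' i), fun i => Real.exp (-h' i))) = (A, B) := by
      ext i <;> simp [hA, hB]
    rwa [heq] at this
  have : g (fun i => Real.exp (m i), F) < g (A, B) := lt_of_le_of_lt step1 step2
  calc g (fun i => Real.exp (m i), fun i => Real.exp (-m i)) < g (A, B) := this
    _ ≤ _ := step3
end
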